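/- On ℝ³ with coordinates (x,y,z), the bracket {u,v} := f · det(∂(g,u,v)/∂(x,y,z)) satisfies the Jacobi identity: {{u,v},w} + {{v,w},u} + {{w,u},v} = 0 for all smooth u,v,w, for any smooth functions f and g. -/

import Mathlib

/-- Partial derivative in the `i`-th coordinate direction on `ℝ³ = Fin 3 → ℝ`. -/
noncomputable def pd (i : Fin 3) (f : (Fin 3 → ℝ) → ℝ) : (Fin 3 → ℝ) → ℝ :=
  fun x => fderiv ℝ f x (Pi.single i 1)

/-- The Jacobian determinant `det(∂(g,u,v)/∂(x,y,z))`. -/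
noncomputable def jdet (g u v : (Fin 3 → ℝ) → ℝ) : (Fin 3 → ℝ) → ℝ := fun x =>
  Matrix.det !![pd 0 g x, pd 1 g x, pd 2 g x;
                pd 0 u x, pd 1 u x, pd 2 u x;
                pd 0 v x, pd 1 v x, pd 2 v x]

/-- The bracket `{u,v} = f · det(∂(g,u,v)/∂(x,y,z))` on `ℝ³`. -/
noncomputable def jbr (f g u v : (Fin 3 → ℝ) → ℝ) : (Fin 3 → ℝ) → ℝ :=
  fun x => f x * jdet g u v x

lemma pd_contDiff {f : (Fin 3 → ℝ) → ℝ} (hf : ContDiff ℝ (⊤ : ℕ∞) f) (i : Fin 3) :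
    ContDiff ℝ (⊤ : ℕ∞) (pd i f) :=
  (hf.fderiv_right (m := (⊤ : ℕ∞)) le_rfl).clm_apply contDiff_const

@[fun_prop] lemma pd_differentiable {f : (Fin 3 → ℝ) → ℝ} (hf : ContDiff ℝ (⊤ : ℕ∞) f) (i : Fin 3) :
    Differentiable ℝ (pd i f) := (pd_contDiff hf i).differentiable (by simp)

lemma pd_mul {a b : (Fin 3 → ℝ) → ℝ} (ha : Differentiable ℝ a) (hb : Differentiable ℝ b)
    (i : Fin 3) (x : Fin 3 → ℝ) :
    pd i (fun y => a y * b y) x = pd i a x * b x + a x * pd i b x := by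
  simp [pd, fderiv_fun_mul (ha x) (hb x)]; ring

lemma pd_add {a b : (Fin 3 → ℝ) → ℝ} (ha : Differentiable ℝ a) (hb : Differentiable ℝ b)
    (i : Fin 3) (x : Fin 3 → ℝ) :
    pd i (fun y => a y + b y) x = pd i a x + pd i b x := by
  simp [pd, fderiv_fun_add (ha x) (hb x)]

lemma pd_sub {a b : (Fin 3 → ℝ) → ℝ} (ha : Differentiable ℝ a) (hb : Differentiable ℝ b)
    (i : Fin 3) (x : Fin 3 → ℝ) :
    pd i (fun y => a y - b y) x = pd i a x - pd i b x := by
  simp [pd, fderiv_fun_sub (ha x) (hb x)]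

lemma pd_comm {h : (Fin 3 → ℝ) → ℝ} (hh : ContDiff ℝ (⊤ : ℕ∞) h) (i j : Fin 3) (x : Fin 3 → ℝ) :
    pd i (pd j h) x = pd j (pd i h) x := by
  have hs : IsSymmSndFDerivAt ℝ h x := by
    apply ContDiffAt.isSymmSndFDerivAt (n := (⊤ : ℕ∞)) hh.contDiffAt
    rw [minSmoothness_of_isRCLikeNormedField]
    exact WithTop.coe_le_coe.mpr le_top
  have hd : Differentiable ℝ (fderiv ℝ h) :=
    (hh.fderiv_right (m := (⊤ : ℕ∞)) le_rfl).differentiable (by simp)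
  have key : ∀ (a b : Fin 3 → ℝ),
      fderiv ℝ (fun y => fderiv ℝ h y a) x b = fderiv ℝ (fderiv ℝ h) x b a := by
    intro a b
    rw [fderiv_clm_apply (hd x) (differentiableAt_const a)]
    simp
  show fderiv ℝ (fun y => fderiv ℝ h y (Pi.single j 1)) x (Pi.single i 1)
     = fderiv ℝ (fun y => fderiv ℝ h y (Pi.single i 1)) x (Pi.single j 1)
  rw [key, key, hs]

lemma pd_comm10 {h : (Fin 3 → ℝ) → ℝ} (hh : ContDiff ℝ (⊤ : ℕ∞) h) (x : Fin 3 → ℝ) :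
    pd 1 (pd 0 h) x = pd 0 (pd 1 h) x := pd_comm hh 1 0 x
lemma pd_comm20 {h : (Fin 3 → ℝ) → ℝ} (hh : ContDiff ℝ (⊤ : ℕ∞) h) (x : Fin 3 → ℝ) :
    pd 2 (pd 0 h) x = pd 0 (pd 2 h) x := pd_comm hh 2 0 x
lemma pd_comm21 {h : (Fin 3 → ℝ) → ℝ} (hh : ContDiff ℝ (⊤ : ℕ∞) h) (x : Fin 3 → ℝ) :
    pd 2 (pd 1 h) x = pd 1 (pd 2 h) x := pd_comm hh 2 1 x

lemma jdet_def (g u v : (Fin 3 → ℝ) → ℝ) : jdet g u v = fun x =>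
    pd 0 g x * pd 1 u x * pd 2 v x - pd 0 g x * pd 2 u x * pd 1 v x
    - pd 1 g x * pd 0 u x * pd 2 v x + pd 1 g x * pd 2 u x * pd 0 v x
    + pd 2 g x * pd 0 u x * pd 1 v x - pd 2 g x * pd 1 u x * pd 0 v x := by
  funext x
  simp [jdet, Matrix.det_fin_three]

lemma jbr_def (f g u v : (Fin 3 → ℝ) → ℝ) : jbr f g u v = fun x => f x * jdet g u v x := rfl

set_option maxHeartbeats 4000000 in
/-- The Jacobian-determinant bracket satisfies the Jacobi identity. -/
theorem jacobian_bracket_jacobi_identity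
    (f g : (Fin 3 → ℝ) → ℝ) (hf : ContDiff ℝ (⊤ : ℕ∞) f) (hg : ContDiff ℝ (⊤ : ℕ∞) g)
    (u v w : (Fin 3 → ℝ) → ℝ)
    (hu : ContDiff ℝ (⊤ : ℕ∞) u) (hv : ContDiff ℝ (⊤ : ℕ∞) v) (hw : ContDiff ℝ (⊤ : ℕ∞) w) :
    ∀ x, jbr f g (jbr f g u v) w x + jbr f g (jbr f g v w) u x
        + jbr f g (jbr f g w u) v x = 0 := by
  intro x
  simp only [jbr_def, jdet_def]
  have hf' : Differentiable ℝ f := hf.differentiable (by simp)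
  simp (disch := fun_prop) only [pd_mul, pd_add, pd_sub]
  simp (disch := assumption) only [pd_comm10, pd_comm20, pd_comm21]
  ring
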